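/- arXiv:2601.13642 — 4 statements merged into one kernel-verified Lean document; each statement's English description precedes it below -/
import Mathlib

section
/- Define the learning-rate sequence η_t = 1 / (1 + t^{2/3} / (8 · ln(4t))) for natural numbers t ≥ 1, where t^{2/3} denotes the real power and ln is the natural logarithm. Then for all natural numbers i, t with 1 ≤ i ≤ t, it holds that η_i · ∏_{j=i+1}^t (1 − η_j) ≤ η_t. -/
open Finset

private lemma log4t_pos {t : ℕ} (ht : 1 ≤ t) : 0 < Real.log (4 * (t : ℝ)) := by
  apply Real.log_pos
  have : (1 : ℝ) ≤ (t : ℝ) := by exact_mod_cast ht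
  nlinarith

private lemma a_nonneg {t : ℕ} (ht : 1 ≤ t) :
    0 ≤ (t : ℝ) ^ ((2 : ℝ) / 3) / (8 * Real.log (4 * (t : ℝ))) := by
  apply div_nonneg (Real.rpow_nonneg (by positivity) _)
  have := log4t_pos ht
  linarith

private lemma rpow_succ_le {t : ℕ} :
    ((t : ℝ) + 1) ^ ((2 : ℝ) / 3) ≤ (t : ℝ) ^ ((2 : ℝ) / 3) + 1 := by
  have h := NNReal.rpow_add_le_add_rpow (t : NNReal) 1 (by norm_num : (0:ℝ) ≤ 2/3)
    (by norm_num : (2:ℝ)/3 ≤ 1)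
  have h' : ((((t : NNReal) + 1) ^ ((2:ℝ)/3) : NNReal) : ℝ)
      ≤ (((t : NNReal) ^ ((2:ℝ)/3) + (1:NNReal) ^ ((2:ℝ)/3) : NNReal) : ℝ) := by
    exact_mod_cast h
  simpa [NNReal.coe_rpow, NNReal.one_rpow] using h'

/-- For the learning rates `η_t = 1 / (1 + t^{2/3} / (8 ln(4t)))`, every weight
`η_i ∏_{j=i+1}^t (1 − η_j)` is dominated by the final learning rate `η_t`. -/
theorem lr_weight_dominated
    (η : ℕ → ℝ)
    (hη : ∀ t : ℕ, 1 ≤ t →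
      η t = 1 / (1 + (t : ℝ) ^ ((2 : ℝ) / 3) / (8 * Real.log (4 * (t : ℝ))))) :
    ∀ i t : ℕ, 1 ≤ i → i ≤ t →
      η i * ∏ j ∈ Finset.Icc (i + 1) t, (1 - η j) ≤ η t := by
  set a : ℕ → ℝ := fun t => (t : ℝ) ^ ((2 : ℝ) / 3) / (8 * Real.log (4 * (t : ℝ))) with ha
  have hηa : ∀ t : ℕ, 1 ≤ t → η t = 1 / (1 + a t) := hη
  have hden : ∀ t : ℕ, 1 ≤ t → 0 < 1 + a t := fun t ht => by
    have := a_nonneg (t := t) ht; linarith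
  have hηpos : ∀ t : ℕ, 1 ≤ t → 0 < η t := fun t ht => by
    rw [hηa t ht]; exact one_div_pos.mpr (hden t ht)
  have hηle1 : ∀ t : ℕ, 1 ≤ t → η t ≤ 1 := fun t ht => by
    rw [hηa t ht]
    rw [div_le_one (hden t ht)]
    have := a_nonneg (t := t) ht; linarith
  -- key step: a (t+1) ≤ 1 + a t for t ≥ 1
  have hstep : ∀ t : ℕ, 1 ≤ t → a (t + 1) ≤ 1 + a t := by
    intro t ht
    have hlogt := log4t_pos ht
    have hlog_le : Real.log (4 * (t : ℝ)) ≤ Real.log (4 * ((t : ℝ) + 1)) := by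
      apply Real.log_le_log (by positivity)
      nlinarith
    have hlogt1 : 0 < Real.log (4 * ((t : ℝ) + 1)) := lt_of_lt_of_le hlogt hlog_le
    have h1 : a (t + 1) ≤ ((t : ℝ) ^ ((2 : ℝ) / 3) + 1) / (8 * Real.log (4 * ((t : ℝ) + 1))) := by
      simp only [ha]
      push_cast
      exact div_le_div_of_nonneg_right rpow_succ_le (by positivity)
    have h2 : ((t : ℝ) ^ ((2 : ℝ) / 3) + 1) / (8 * Real.log (4 * ((t : ℝ) + 1)))
        ≤ (t : ℝ) ^ ((2 : ℝ) / 3) / (8 * Real.log (4 * (t : ℝ)))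
          + 1 / (8 * Real.log (4 * ((t : ℝ) + 1))) := by
      rw [add_div]
      gcongr
    have hlog4 : (1 : ℝ) ≤ Real.log (4 * ((t : ℝ) + 1)) := by
      have : Real.exp 1 ≤ 4 * ((t : ℝ) + 1) := by
        have := Real.exp_one_lt_d9
        have ht' : (1 : ℝ) ≤ (t : ℝ) := by exact_mod_cast ht
        nlinarith
      calc (1 : ℝ) = Real.log (Real.exp 1) := (Real.log_exp 1).symm
        _ ≤ _ := Real.log_le_log (Real.exp_pos 1) this
    have h3 : 1 / (8 * Real.log (4 * ((t : ℝ) + 1))) ≤ 1 := by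
      rw [div_le_one (by positivity)]; nlinarith
    have : a (t + 1) ≤ a t + 1 / (8 * Real.log (4 * ((t : ℝ) + 1))) := le_trans h1 h2
    linarith
  intro i t hi hit
  induction t with
  | zero => omega
  | succ t ih =>
    rcases Nat.lt_or_ge i (t + 1) with h | h
    · have hit' : i ≤ t := by omega
      have ht1 : 1 ≤ t := by omega
      have ih' := ih hit'
      have hkey : η t * (1 - η (t + 1)) ≤ η (t + 1) := by
        rw [hηa t ht1, hηa (t + 1) (by omega)]
        have hdt := hden t ht1
        have hdt1 := hden (t + 1) (by omega)
        have h1 : 1 - 1 / (1 + a (t + 1)) = a (t + 1) / (1 + a (t + 1)) := by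
          field_simp
          ring
        have hs := hstep t ht1
        rw [h1, div_mul_div_comm, one_mul, div_le_div_iff₀ (by positivity) hdt1]
        nlinarith
      have hprodnn : 0 ≤ ∏ j ∈ Finset.Icc (i + 1) t, (1 - η j) := by
        apply Finset.prod_nonneg
        intro j hj
        simp only [Finset.mem_Icc] at hj
        have := hηle1 j (by omega)
        linarith
      rw [Finset.prod_Icc_succ_top (by omega : i + 1 ≤ t + 1), ← mul_assoc]
      calc η i * (∏ j ∈ Finset.Icc (i + 1) t, (1 - η j)) * (1 - η (t + 1))
          ≤ η t * (1 - η (t + 1)) := by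
            apply mul_le_mul_of_nonneg_right ih'
            have := hηle1 (t + 1) (by omega); linarith
        _ ≤ η (t + 1) := hkey
    · have : i = t + 1 := by omega
      subst this
      simp
end

section
/- Let S and A be nonempty finite types, r : S × A → ℝ, and P : S × A → S → ℝ a transition kernel (P(s'|s,a) ≥ 0 for all s' and ∑_{s'∈S} P(s'|s,a) = 1 for every (s,a)). Suppose J ∈ ℝ, V : S → ℝ, Q : S × A → ℝ satisfy the Bellman optimality relations: J + Q(s,a) = r(s,a) + ∑_{s'} P(s'|s,a) · V(s') for all (s,a), and V(s) = max_{a∈A} Q(s,a) for all s. For each natural number k ≥ 1 define V_k(s) := J + V(s)/k and Q_{k+1}(s,a) := r(s,a)/(k+1) + (k/(k+1)) · ∑_{s'} P(s'|s,a) · V_k(s'). Then for all k ≥ 1: (i) Q_{k+1}(s,a) = J + Q(s,a)/(k+1) for all (s,a); (ii) max_{a∈A} Q_{k+1}(s,a) = V_{k+1}(s) for all s; (iii) max_{(s,a)} |Q_{k+1}(s,a)| ≤ |J| + (max_{(s,a)} |Q(s,a)|)/(k+1). -/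
/-!
Substituting `V_k = J + V/k` into the recursion and using `∑ P(·|s,a) = 1`, the `J` passes
through the transition average and the Bellman relation turns
`r/(k+1) + k/(k+1) (J + PV/k)` into `J + Q/(k+1)`. The remaining two claims follow because
`x ↦ J + x/(k+1)` is monotone, so it commutes with the maximum over actions, and because of
the triangle inequality.
-/

open Finset

lemma Finset.sum_mul_const_add_of_sum_eq_one {ι R : Type*} [CommSemiring R] (s : Finset ι)
    (p f : ι → R) (c : R) (hp : ∑ i ∈ s, p i = 1) :
    ∑ i ∈ s, p i * (c + f i) = c + ∑ i ∈ s, p i * f i := by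
  simp only [mul_add, sum_add_distrib, ← sum_mul, hp, one_mul]

lemma Finset.sum_mul_const_add_div_of_sum_eq_one {ι : Type*} (s : Finset ι) (p f : ι → ℝ) (c d : ℝ)
    (hp : ∑ i ∈ s, p i = 1) :
    ∑ i ∈ s, p i * (c + f i / d) = c + (∑ i ∈ s, p i * f i) / d := by
  simp only [s.sum_mul_const_add_of_sum_eq_one p _ c hp, sum_div, mul_div_assoc]

lemma discounted_bellman_step {J q r pv k : ℝ} (hk : 0 < k) (hbellman : J + q = r + pv) :
    r / (k + 1) + k / (k + 1) * (J + pv / k) = J + q / (k + 1) := by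
  field_simp
  linarith

lemma Finset.sup'_const_add_div {ι : Type*} (s : Finset ι) (hs : s.Nonempty) (f : ι → ℝ)
    (J : ℝ) {c : ℝ} (hc : 0 < c) :
    s.sup' hs (fun i => J + f i / c) = J + s.sup' hs f / c := by
  rw [sup'_div₀ hc.le, add_sup']

lemma Finset.sup'_abs_const_add_div_le {ι : Type*} (s : Finset ι) (hs : s.Nonempty)
    (f : ι → ℝ) (J : ℝ) {c : ℝ} (hc : 0 < c) :
    s.sup' hs (fun i => |J + f i / c|) ≤ |J| + s.sup' hs (fun i => |f i|) / c := by
  refine sup'_le _ _ fun i hi => ?_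
  calc |J + f i / c| ≤ |J| + |f i| / c := by
        grw [abs_add_le, abs_div, abs_of_pos hc]
    _ ≤ |J| + s.sup' hs (fun i => |f i|) / c := by
        grw [le_sup' (fun i => |f i|) hi]

theorem auxiliary_sequence_properties_general
    {S A : Type*} [Fintype S] [Nonempty S] [Fintype A] [Nonempty A]
    (r : S × A → ℝ) (P : S × A → S → ℝ)
    (hP_sum : ∀ sa, ∑ s' : S, P sa s' = 1)
    (J : ℝ) (V : S → ℝ) (Q : S × A → ℝ)
    (hbellman : ∀ s a, J + Q (s, a) = r (s, a) + ∑ s' : S, P (s, a) s' * V s')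
    (hmax : ∀ s, V s = univ.sup' univ_nonempty (fun a => Q (s, a)))
    (Vk : ℕ → S → ℝ) (Qk : ℕ → S × A → ℝ)
    (hVk : ∀ k : ℕ, 1 ≤ k → ∀ s, Vk k s = J + V s / (k : ℝ))
    (hQk : ∀ k : ℕ, 1 ≤ k → ∀ s a,
      Qk (k + 1) (s, a) = r (s, a) / ((k : ℝ) + 1) +
        ((k : ℝ) / ((k : ℝ) + 1)) * ∑ s' : S, P (s, a) s' * Vk k s') :
    ∀ k : ℕ, 1 ≤ k →
      (∀ s a, Qk (k + 1) (s, a) = J + Q (s, a) / ((k : ℝ) + 1)) ∧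
      (∀ s, univ.sup' univ_nonempty (fun a => Qk (k + 1) (s, a)) = Vk (k + 1) s) ∧
      (univ.sup' univ_nonempty (fun sa : S × A => |Qk (k + 1) sa|) ≤
        |J| + univ.sup' univ_nonempty (fun sa : S × A => |Q sa|) / ((k : ℝ) + 1)) := by
  intro k hk
  have hk_pos : (0 : ℝ) < k := by exact_mod_cast hk
  have hQ_eq : ∀ s a, Qk (k + 1) (s, a) = J + Q (s, a) / ((k : ℝ) + 1) := fun s a => by
    rw [hQk k hk s a, sum_congr rfl fun s' _ => by rw [hVk k hk s'],
      Finset.sum_mul_const_add_div_of_sum_eq_one _ _ _ _ _ (hP_sum (s, a))]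
    exact discounted_bellman_step hk_pos (hbellman s a)
  refine ⟨hQ_eq, fun s => ?_, ?_⟩
  · simp only [hQ_eq s, univ.sup'_const_add_div _ _ J (by positivity : (0 : ℝ) < k + 1),
      ← hmax s, hVk (k + 1) (by omega) s, Nat.cast_succ]
  · simpa only [hQ_eq] using univ.sup'_abs_const_add_div_le univ_nonempty Q J
      (by positivity : (0 : ℝ) < k + 1)

/-- Properties of the auxiliary sequences `V_k(s) = J + V(s)/k` and
`Q_{k+1}(s,a) = r(s,a)/(k+1) + (k/(k+1)) ∑_{s'} P(s'|s,a) V_k(s')`. -/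
theorem auxiliary_sequence_properties
    {S A : Type*} [Fintype S] [Nonempty S] [Fintype A] [Nonempty A]
    (r : S × A → ℝ) (P : S × A → S → ℝ)
    (hP_nonneg : ∀ sa s', 0 ≤ P sa s')
    (hP_sum : ∀ sa, ∑ s' : S, P sa s' = 1)
    (J : ℝ) (V : S → ℝ) (Q : S × A → ℝ)
    (hbellman : ∀ s a, J + Q (s, a) = r (s, a) + ∑ s' : S, P (s, a) s' * V s')
    (hmax : ∀ s, V s = univ.sup' univ_nonempty (fun a => Q (s, a)))
    (Vk : ℕ → S → ℝ) (Qk : ℕ → S × A → ℝ)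
    (hVk : ∀ k : ℕ, 1 ≤ k → ∀ s, Vk k s = J + V s / (k : ℝ))
    (hQk : ∀ k : ℕ, 1 ≤ k → ∀ s a,
      Qk (k + 1) (s, a) = r (s, a) / ((k : ℝ) + 1) +
        ((k : ℝ) / ((k : ℝ) + 1)) * ∑ s' : S, P (s, a) s' * Vk k s') :
    ∀ k : ℕ, 1 ≤ k →
      (∀ s a, Qk (k + 1) (s, a) = J + Q (s, a) / ((k : ℝ) + 1)) ∧
      (∀ s, univ.sup' univ_nonempty (fun a => Qk (k + 1) (s, a)) = Vk (k + 1) s) ∧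
      (univ.sup' univ_nonempty (fun sa : S × A => |Qk (k + 1) sa|) ≤
        |J| + univ.sup' univ_nonempty (fun sa : S × A => |Q sa|) / ((k : ℝ) + 1)) :=
  auxiliary_sequence_properties_general r P hP_sum J V Q hbellman hmax Vk Qk hVk hQk
end

section
/- Let γ ∈ [0, 1), A ≥ 0, B ≥ 0 be real numbers, let w ≥ 1, L ≥ 0, N be natural numbers with N ≥ (L+1) · w, and let b : ℕ → ℝ satisfy 0 ≤ b_i ≤ B for all i ≤ N. Suppose that for every natural number t with N − L·w < t ≤ N we have b_t ≤ A + γ · max_{t−w ≤ i ≤ t−1} b_i. Then b_N ≤ A / (1 − γ) + γ^L · B. -/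
/-!
The map `C ↦ A + γ C` sends `A / (1 - γ) + γ ^ L * B` to `A / (1 - γ) + γ ^ (L + 1) * B`.
So, by induction on `L` generalizing `N`: the window of length `w` below `N` consists of indices
`i ≥ (L + 1) w` whose own recursion range `(i - L w, i]` lies inside `(N - (L + 1) w, N]`; each
is bounded by the level-`L` bound, and one more step of the recursion gives level `L + 1`.
-/

open Finset

lemma add_mul_div_one_sub_add_pow_mul {K : Type*} [Field K] {γ : K} (hγ : γ ≠ 1) (A B : K)
    (L : ℕ) : A + γ * (A / (1 - γ) + γ ^ L * B) = A / (1 - γ) + γ ^ (L + 1) * B := by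
  have : 1 - γ ≠ 0 := sub_ne_zero.mpr hγ.symm
  field_simp
  ring

theorem le_div_one_sub_add_pow_mul_of_window_rec {γ A B : ℝ} (hγ : γ < 1) (hA : 0 ≤ A)
    {w : ℕ} (hw : 0 < w) {b : ℕ → ℝ} {L N : ℕ} (hN : (L + 1) * w ≤ N)
    (hb : ∀ i ≤ N, b i ≤ B)
    (hrec : ∀ t, N - L * w < t → t ≤ N →
      ∀ C, (∀ i ∈ Icc (t - w) (t - 1), b i ≤ C) → b t ≤ A + γ * C) :
    b N ≤ A / (1 - γ) + γ ^ L * B := by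
  induction L generalizing N with
  | zero =>
    rw [pow_zero, one_mul]
    linarith [hb N le_rfl, div_nonneg hA (sub_nonneg.mpr hγ.le)]
  | succ L ih =>
    simp only [add_one_mul] at hN hrec ih ⊢
    have hwindow : ∀ i ∈ Icc (N - w) (N - 1), b i ≤ A / (1 - γ) + γ ^ L * B := by
      intro i hi
      rw [mem_Icc] at hi
      exact ih (by omega) (fun j hj => hb j (by omega))
        fun t ht htN => hrec t (by omega) (by omega)
    rw [← add_mul_div_one_sub_add_pow_mul hγ.ne]
    exact hrec N (by omega) le_rfl _ hwindow

theorem windowed_recursion_bound_general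
    (γ A B : ℝ) (hγ_nonneg : 0 ≤ γ) (hγ_lt : γ < 1)
    (hA : 0 ≤ A)
    (w L N : ℕ) (hw : 1 ≤ w) (hN : (L + 1) * w ≤ N)
    (b : ℕ → ℝ)
    (hb : ∀ i ≤ N, 0 ≤ b i ∧ b i ≤ B)
    (hrec : ∀ t : ℕ, N - L * w < t → t ≤ N →
      b t ≤ A + γ * (Finset.Icc (t - w) (t - 1)).sup'
        (Finset.nonempty_Icc.mpr (Nat.sub_le_sub_left hw t)) b) :
    b N ≤ A / (1 - γ) + γ ^ L * B :=
  le_div_one_sub_add_pow_mul_of_window_rec hγ_lt hA hw hN (fun i hi => (hb i hi).2)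
    fun t ht htN C hC =>
      (hrec t ht htN).trans <| by gcongr; exact Finset.sup'_le _ _ hC

/-- Abstract windowed-recursion lemma: if a nonnegative bounded sequence
satisfies `b_t ≤ A + γ · max_{t−w ≤ i ≤ t−1} b_i` on a trailing range of length
`L·w`, then `b_N ≤ A/(1−γ) + γ^L B`. -/
theorem windowed_recursion_bound
    (γ A B : ℝ) (hγ_nonneg : 0 ≤ γ) (hγ_lt : γ < 1)
    (hA : 0 ≤ A) (hB : 0 ≤ B)
    (w L N : ℕ) (hw : 1 ≤ w) (hN : (L + 1) * w ≤ N)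
    (b : ℕ → ℝ)
    (hb : ∀ i ≤ N, 0 ≤ b i ∧ b i ≤ B)
    (hrec : ∀ t : ℕ, N - L * w < t → t ≤ N →
      b t ≤ A + γ * (Finset.Icc (t - w) (t - 1)).sup'
        (Finset.nonempty_Icc.mpr (Nat.sub_le_sub_left hw t)) b) :
    b N ≤ A / (1 - γ) + γ ^ L * B :=
  windowed_recursion_bound_general γ A B hγ_nonneg hγ_lt hA w L N hw hN b hb hrec
end

section
/- Let (Ω, ℱ, μ) be a probability space, ι a nonempty finite type, S a nonempty finite type, t ≥ 1 a natural number, and for each x ∈ ι let p_x : S → ℝ be a probability vector (p_x(s') ≥ 0 and ∑_{s'} p_x(s') = 1). Let V : S → ℝ and let D := max_s V(s) − min_s V(s). Suppose (Z_{i,x})_{1 ≤ i ≤ t, x ∈ ι} is an independent family of measurable random variables Z_{i,x} : Ω → S such that Z_{i,x} has distribution p_x (i.e., μ(Z_{i,x} = s') = p_x(s') for all s'). Let w_1, …, w_t ≥ 0 be real weights and δ ∈ (0, 1). Then with probability at least 1 − δ, for every x ∈ ι simultaneously, |∑_{i=1}^t w_i · (V(Z_{i,x}) − ∑_{s'} p_x(s')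 · V(s'))| ≤ D · sqrt((1/2) · (∑_{i=1}^t w_i²) · ln(2·|ι|/δ)). -/
open Finset MeasureTheory ProbabilityTheory

section Helpers

open Real


/-- Core scalar inequality for Hoeffding's lemma. -/
theorem hoeffding_scalar {p : ℝ} (hp0 : 0 ≤ p) (hp1 : p ≤ 1) (h : ℝ) :
    (1 - p) * exp (-p * h) + p * exp ((1 - p) * h) ≤ exp (h ^ 2 / 8) := by
  set g : ℝ → ℝ := fun u => 1 - p + p * exp u with hg
  have hgpos : ∀ u, 0 < g u := by
    intro u
    rcases eq_or_lt_of_le hp0 with hp | hp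
    · simp [hg, ← hp]
    · have := exp_pos u
      simp only [hg]
      nlinarith
  set f : ℝ → ℝ := fun u => u ^ 2 / 8 + p * u - log (g u) with hf
  set f' : ℝ → ℝ := fun u => u / 4 + p - p * exp u / g u with hf'
  have hderiv : ∀ u, HasDerivAt f (f' u) u := by
    intro u
    have hgd : HasDerivAt g (p * exp u) u := by
      exact ((Real.hasDerivAt_exp u).const_mul p).const_add (1 - p)
    have h1 : HasDerivAt (fun u : ℝ => u ^ 2 / 8 + p * u) (u / 4 + p) u := by
      have := ((hasDerivAt_pow 2 u).div_const 8).add ((hasDerivAt_id u).const_mul p)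
      exact this.congr_deriv (by norm_num; ring)
    have h2 : HasDerivAt (fun u => log (g u)) (p * exp u / g u) u :=
      hgd.log (hgpos u).ne'
    exact h1.sub h2
  have hderiv' : ∀ u, HasDerivAt f' (1 / 4 - (p * exp u * g u - p * exp u * (p * exp u)) / g u ^ 2) u := by
    intro u
    have hgd : HasDerivAt g (p * exp u) u := by
      exact ((Real.hasDerivAt_exp u).const_mul p).const_add (1 - p)
    have hnum : HasDerivAt (fun u => p * exp u) (p * exp u) u :=
      (Real.hasDerivAt_exp u).const_mul p
    have hdiv : HasDerivAt (fun u => p * exp u / g u)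
        ((p * exp u * g u - p * exp u * (p * exp u)) / g u ^ 2) u :=
      hnum.div hgd (hgpos u).ne'
    have h1 : HasDerivAt (fun u : ℝ => u / 4 + p) (1 / 4) u := by
      simpa using ((hasDerivAt_id u).div_const 4).add_const p
    exact h1.sub hdiv
  have hsecond_nonneg : ∀ u, 0 ≤ 1 / 4 - (p * exp u * g u - p * exp u * (p * exp u)) / g u ^ 2 := by
    intro u
    have hgp := hgpos u
    rw [sub_nonneg, div_le_iff₀ (by positivity)]
    have : p * exp u * g u - p * exp u * (p * exp u) = (p * exp u) * (1 - p) := by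
      simp only [hg]; ring
    rw [this]
    have h4 : 4 * ((p * exp u) * (1 - p)) ≤ ((1 - p) + p * exp u) ^ 2 := by nlinarith [sq_nonneg ((1 - p) - p * exp u)]
    have : g u = (1 - p) + p * exp u := by simp [hg]
    nlinarith
  have hf'mono : Monotone f' := by
    apply monotone_of_deriv_nonneg
    · exact fun u => (hderiv' u).differentiableAt
    · intro u
      rw [(hderiv' u).deriv]
      exact hsecond_nonneg u
  have hf'0 : f' 0 = 0 := by
    simp [hf', hg]
  have hf0 : f 0 = 0 := by
    simp [hf, hg]
  have hfnonneg : ∀ u, 0 ≤ f u := by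
    intro u
    rcases le_total 0 u with hu | hu
    · have hmono : MonotoneOn f (Set.Ici (0 : ℝ)) := by
        apply monotoneOn_of_deriv_nonneg (convex_Ici 0)
        · have hdf : Differentiable ℝ f := fun u => (hderiv u).differentiableAt
          exact hdf.continuous.continuousOn
        · intro u _
          exact (hderiv u).differentiableAt.differentiableWithinAt
        · intro v hv
          rw [(hderiv v).deriv]
          have hv0 : (0:ℝ) ≤ v := le_of_lt (by simpa [interior_Ici] using hv)
          calc (0:ℝ) = f' 0 := hf'0.symm
            _ ≤ f' v := hf'mono hv0
      have := hmono (Set.self_mem_Ici) (Set.mem_Ici.mpr hu) hu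
      rwa [hf0] at this
    · have hanti : AntitoneOn f (Set.Iic (0 : ℝ)) := by
        apply antitoneOn_of_deriv_nonpos (convex_Iic 0)
        · have hdf : Differentiable ℝ f := fun u => (hderiv u).differentiableAt
          exact hdf.continuous.continuousOn
        · intro u _
          exact (hderiv u).differentiableAt.differentiableWithinAt
        · intro v hv
          rw [(hderiv v).deriv]
          have hv0 : v ≤ (0:ℝ) := le_of_lt (by simpa [interior_Iic] using hv)
          calc f' v ≤ f' 0 := hf'mono hv0
            _ = 0 := hf'0
      have := hanti (Set.mem_Iic.mpr hu) (Set.self_mem_Iic) hu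
      rwa [hf0] at this
  -- conclude
  have hlog : log (g h) ≤ p * h + h ^ 2 / 8 := by
    have := hfnonneg h
    simp only [hf] at this
    linarith
  have hgh : g h ≤ exp (p * h + h ^ 2 / 8) := by
    calc g h = exp (log (g h)) := (exp_log (hgpos h)).symm
      _ ≤ exp (p * h + h ^ 2 / 8) := exp_le_exp.mpr hlog
  have key : exp (-p * h) * g h ≤ exp (h ^ 2 / 8) := by
    calc exp (-p * h) * g h ≤ exp (-p * h) * exp (p * h + h ^ 2 / 8) := by
          exact mul_le_mul_of_nonneg_left hgh (exp_pos _).le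
      _ = exp (h ^ 2 / 8) := by rw [← exp_add]; ring_nf
  calc (1 - p) * exp (-p * h) + p * exp ((1 - p) * h)
      = exp (-p * h) * g h := by
        have he : exp ((1 - p) * h) = exp (-p * h) * exp h := by
          rw [← exp_add]; ring_nf
        simp only [hg, he]
        ring
    _ ≤ exp (h ^ 2 / 8) := key


lemma iIndepFun_precomp {ι ι' Ω β : Type*} [MeasurableSpace Ω] [mβ : MeasurableSpace β]
    {μ : Measure Ω} {f : ι → Ω → β} (g : ι' → ι) (hg : Function.Injective g)
    (h : iIndepFun f μ) :
    iIndepFun (fun i' => f (g i')) μ := by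
  classical
  rw [iIndepFun_iff_measure_inter_preimage_eq_mul] at h ⊢
  intro S sets hsets
  set sets' : ι → Set β :=
    fun i => if hi : ∃ i' ∈ S, g i' = i then sets hi.choose else Set.univ with hsets'def
  have hkey : ∀ i' ∈ S, sets' (g i') = sets i' := by
    intro i' hi'
    have hex : ∃ j ∈ S, g j = g i' := ⟨i', hi', rfl⟩
    rw [hsets'def]
    simp only
    rw [dif_pos hex]
    exact congrArg sets (hg hex.choose_spec.2)
  have hsets'meas : ∀ i ∈ S.map ⟨g, hg⟩, MeasurableSet (sets' i) := by
    intro i _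
    rw [hsets'def]
    simp only
    split
    · next hex => exact hsets _ hex.choose_spec.1
    · exact MeasurableSet.univ
  have h' := h (S.map ⟨g, hg⟩) hsets'meas
  have hInter : (⋂ i ∈ S.map ⟨g, hg⟩, f i ⁻¹' sets' i)
      = ⋂ i' ∈ S, f (g i') ⁻¹' sets i' := by
    ext ω
    simp only [Set.mem_iInter, Finset.mem_map, Function.Embedding.coeFn_mk]
    constructor
    · intro hω i' hi'
      have := hω (g i') ⟨i', hi', rfl⟩
      rwa [hkey i' hi'] at this
    · rintro hω i ⟨i', hi', rfl⟩
      rw [hkey i' hi']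
      exact hω i' hi'
  have hProd : (∏ i ∈ S.map ⟨g, hg⟩, μ (f i ⁻¹' sets' i))
      = ∏ i' ∈ S, μ (f (g i') ⁻¹' sets i') := by
    rw [Finset.prod_map]
    exact Finset.prod_congr rfl fun i' hi' => by
      simp only [Function.Embedding.coeFn_mk, hkey i' hi']
  rw [hInter, hProd] at h'
  exact h'

lemma exp_convex_bound {a b x : ℝ} (hab : a < b) (hax : a ≤ x) (hxb : x ≤ b) (l : ℝ) :
    exp (l * x) ≤ (b - x) / (b - a) * exp (l * a) + (x - a) / (b - a) * exp (l * b) := by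
  have hc : (0:ℝ) < b - a := by linarith
  have hθ1 : 0 ≤ (b - x) / (b - a) := by apply div_nonneg _ hc.le; linarith
  have hθ2 : 0 ≤ (x - a) / (b - a) := by apply div_nonneg _ hc.le; linarith
  have hθ : (b - x) / (b - a) + (x - a) / (b - a) = 1 := by field_simp; ring
  have hcomb : (b - x) / (b - a) * (l * a) + (x - a) / (b - a) * (l * b) = l * x := by
    field_simp; ring
  have := convexOn_exp.2 (Set.mem_univ (l * a)) (Set.mem_univ (l * b)) hθ1 hθ2 hθ
  rw [smul_eq_mul, smul_eq_mul, smul_eq_mul, smul_eq_mul, hcomb] at this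
  exact this

theorem hoeffding_finsum {S : Type*} [Fintype S] [Nonempty S]
    (q : S → ℝ) (hq0 : ∀ s, 0 ≤ q s) (hq1 : ∑ s, q s = 1)
    (f : S → ℝ) (a b : ℝ) (hab : ∀ s, a ≤ f s ∧ f s ≤ b)
    (hmean : ∑ s, q s * f s = 0) (l : ℝ) :
    ∑ s, q s * exp (l * f s) ≤ exp (l ^ 2 * (b - a) ^ 2 / 8) := by
  have ha0 : a ≤ 0 := by
    calc a = ∑ s, q s * a := by rw [← Finset.sum_mul, hq1, one_mul]
      _ ≤ ∑ s, q s * f s := Finset.sum_le_sum fun s _ => mul_le_mul_of_nonneg_left (hab s).1 (hq0 s)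
      _ = 0 := hmean
  have hb0 : 0 ≤ b := by
    calc (0:ℝ) = ∑ s, q s * f s := hmean.symm
      _ ≤ ∑ s, q s * b := Finset.sum_le_sum fun s _ => mul_le_mul_of_nonneg_left (hab s).2 (hq0 s)
      _ = b := by rw [← Finset.sum_mul, hq1, one_mul]
  rcases eq_or_lt_of_le (ha0.trans hb0) with hab_eq | hab_lt
  · have ha : a = 0 := le_antisymm ha0 (by linarith)
    have hb : b = 0 := by linarith
    have hf0 : ∀ s, f s = 0 := fun s =>
      le_antisymm (hb ▸ (hab s).2) (ha ▸ (hab s).1)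
    have he : ∀ s, q s * exp (l * f s) = q s := by
      intro s; rw [hf0 s]; simp
    rw [Finset.sum_congr rfl fun s _ => he s, hq1, ha, hb]
    simp
  · have hcpos : (0:ℝ) < b - a := by linarith
    have hstep : ∑ s, q s * exp (l * f s) ≤
        b / (b - a) * exp (l * a) + -a / (b - a) * exp (l * b) := by
      calc ∑ s, q s * exp (l * f s)
          ≤ ∑ s, q s * ((b - f s) / (b - a) * exp (l * a) + (f s - a) / (b - a) * exp (l * b)) :=
            Finset.sum_le_sum fun s _ => mul_le_mul_of_nonneg_left
              (exp_convex_bound hab_lt (hab s).1 (hab s).2 l) (hq0 s)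
        _ = (∑ s, q s * (b - f s)) / (b - a) * exp (l * a)
            + (∑ s, q s * (f s - a)) / (b - a) * exp (l * b) := by
            rw [Finset.sum_div, Finset.sum_div, Finset.sum_mul, Finset.sum_mul,
              ← Finset.sum_add_distrib]
            exact Finset.sum_congr rfl fun s _ => by ring
        _ = b / (b - a) * exp (l * a) + -a / (b - a) * exp (l * b) := by
            have e1 : ∑ s, q s * (b - f s) = b := by
              simp only [mul_sub]
              rw [Finset.sum_sub_distrib, hmean, ← Finset.sum_mul, hq1]; ring
            have e2 : ∑ s, q s * (f s - a) = -a := by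
              simp only [mul_sub]
              rw [Finset.sum_sub_distrib, hmean, ← Finset.sum_mul, hq1]; ring
            rw [e1, e2]
    have hP0 : 0 ≤ -a / (b - a) := div_nonneg (by linarith) hcpos.le
    have hP1 : -a / (b - a) ≤ 1 := by rw [div_le_one hcpos]; linarith
    have key := hoeffding_scalar hP0 hP1 (l * (b - a))
    have h1 : -(-a / (b - a)) * (l * (b - a)) = l * a := by field_simp
    have h2 : (1 - -a / (b - a)) * (l * (b - a)) = l * b := by field_simp; ring
    have h3 : (1 - -a / (b - a)) = b / (b - a) := by field_simp; ring
    rw [h1, h2, h3] at key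
    have hfin : (l * (b - a)) ^ 2 / 8 = l ^ 2 * (b - a) ^ 2 / 8 := by ring
    calc ∑ s, q s * exp (l * f s)
        ≤ b / (b - a) * exp (l * a) + -a / (b - a) * exp (l * b) := hstep
      _ ≤ exp ((l * (b - a)) ^ 2 / 8) := key
      _ = exp (l ^ 2 * (b - a) ^ 2 / 8) := by rw [hfin]


end Helpers

open Real

/-- Hoeffding-type concentration with a union bound: for an independent family
of next-state samples `Z_{i,x} ~ p_x`, `1 ≤ i ≤ t`, `x ∈ ι`, with probability at
least `1 − δ` the weighted empirical Bellman noise at every `x` is bounded by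
`D √((1/2) (∑ w_i²) ln(2|ι|/δ))`, where `D` is the span of `V`. -/
theorem weighted_bellman_noise_concentration
    {Ω : Type*} [MeasurableSpace Ω] (μ : Measure Ω) [IsProbabilityMeasure μ]
    {ι : Type*} [Fintype ι] [Nonempty ι]
    {S : Type*} [Fintype S] [Nonempty S] [MeasurableSpace S]
    [MeasurableSingletonClass S]
    (t : ℕ) (ht : 1 ≤ t)
    (p : ι → S → ℝ)
    (hp_nonneg : ∀ x s', 0 ≤ p x s')
    (hp_sum : ∀ x, ∑ s' : S, p x s' = 1)
    (V : S → ℝ)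
    (D : ℝ) (hD : D = univ.sup' univ_nonempty V - univ.inf' univ_nonempty V)
    (Z : ℕ → ι → Ω → S)
    (hZ_meas : ∀ i x, Measurable (Z i x))
    (hZ_indep : iIndepFun
      (fun q : {i : ℕ // 1 ≤ i ∧ i ≤ t} × ι => Z q.1.1 q.2) μ)
    (hZ_dist : ∀ i, 1 ≤ i → i ≤ t → ∀ x s',
      (μ {ω | Z i x ω = s'}).toReal = p x s')
    (w : ℕ → ℝ) (hw : ∀ i, 1 ≤ i → i ≤ t → 0 ≤ w i)
    (δ : ℝ) (hδ_pos : 0 < δ) (hδ_lt : δ < 1) :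
    ENNReal.ofReal (1 - δ) ≤
      μ {ω | ∀ x : ι,
        |∑ i ∈ Finset.Icc 1 t,
            w i * (V (Z i x ω) - ∑ s' : S, p x s' * V s')| ≤
          D * Real.sqrt ((1 / 2) * (∑ i ∈ Finset.Icc 1 t, w i ^ 2) *
            Real.log (2 * (Fintype.card ι : ℝ) / δ))} := by
  classical
  set K : ℝ := (Fintype.card ι : ℝ) with hK
  have hKpos : 0 < K := by
    simp only [hK]
    exact_mod_cast Fintype.card_pos
  have hK1 : 1 ≤ K := by
    simp only [hK]
    exact_mod_cast Fintype.card_pos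
  set S₂ : ℝ := ∑ i ∈ Finset.Icc 1 t, w i ^ 2 with hS₂def
  have hS₂0 : 0 ≤ S₂ := Finset.sum_nonneg fun i _ => sq_nonneg _
  have hfrac : 1 < 2 * K / δ := by
    rw [lt_div_iff₀ hδ_pos]
    nlinarith
  set L : ℝ := Real.log (2 * K / δ) with hLdef
  have hL : 0 < L := Real.log_pos hfrac
  -- span nonnegativity
  obtain ⟨s₀⟩ := (inferInstance : Nonempty S)
  have hD0 : 0 ≤ D := by
    rw [hD, sub_nonneg]
    exact le_trans (Finset.inf'_le _ (Finset.mem_univ s₀)) (Finset.le_sup' _ (Finset.mem_univ s₀))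
  set ε : ℝ := D * Real.sqrt (1 / 2 * S₂ * L) with hεdef
  have hε0 : 0 ≤ ε := mul_nonneg hD0 (Real.sqrt_nonneg _)
  -- the mean value
  set m : ι → ℝ := fun x => ∑ s' : S, p x s' * V s' with hm
  set N : ι → Ω → ℝ := fun x ω => ∑ i ∈ Finset.Icc 1 t, w i * (V (Z i x ω) - m x) with hN
  -- change goal
  show ENNReal.ofReal (1 - δ) ≤ μ {ω | ∀ x : ι, |N x ω| ≤ ε}
  by_cases hdeg : D = 0 ∨ S₂ = 0
  · have hzero : ∀ x ω, N x ω = 0 := by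
      intro x ω
      rcases hdeg with hD0' | hS0'
      · have hVconst : ∀ s, V s = univ.inf' univ_nonempty V := by
          intro s
          have h1 : V s ≤ univ.sup' univ_nonempty V := Finset.le_sup' _ (Finset.mem_univ s)
          have h2 : univ.inf' univ_nonempty V ≤ V s := Finset.inf'_le _ (Finset.mem_univ s)
          have := hD0'
          rw [hD, sub_eq_zero] at this
          linarith [this]
        have hmx : m x = univ.inf' univ_nonempty V := by
          simp only [hm]
          rw [Finset.sum_congr rfl fun s _ => by rw [hVconst s], ← Finset.sum_mul, hp_sum, one_mul]
        apply Finset.sum_eq_zero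
        intro i _
        rw [hVconst (Z i x ω), hmx]
        ring
      · have hw0 : ∀ i ∈ Finset.Icc 1 t, w i = 0 := by
          intro i hi
          have h2 : w i ^ 2 = 0 :=
            (Finset.sum_eq_zero_iff_of_nonneg fun j _ => sq_nonneg (w j)).mp hS0' i hi
          exact pow_eq_zero_iff (n := 2) (by norm_num) |>.mp h2
        apply Finset.sum_eq_zero
        intro i hi
        rw [hw0 i hi, zero_mul]
    have hset : {ω | ∀ x : ι, |N x ω| ≤ ε} = Set.univ := by
      apply Set.eq_univ_of_forall
      intro ω x
      rw [hzero x ω]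
      simpa using hε0
    rw [hset, measure_univ]
    exact ENNReal.ofReal_le_one.mpr (by linarith)
  · push_neg at hdeg
    have hDpos : 0 < D := lt_of_le_of_ne hD0 (Ne.symm hdeg.1)
    have hS₂pos : 0 < S₂ := lt_of_le_of_ne hS₂0 (Ne.symm hdeg.2)
    have hε2 : ε ^ 2 = D ^ 2 * (1 / 2 * S₂ * L) := by
      rw [hεdef, mul_pow, Real.sq_sqrt (by positivity)]
    -- per-x tail bounds
    have htail : ∀ x : ι, (μ {ω | ε ≤ N x ω}).toReal ≤ δ / (2 * K) ∧
        (μ {ω | N x ω ≤ -ε}).toReal ≤ δ / (2 * K) := by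
      intro x
      -- subtype machinery
      set σ := {i : ℕ // 1 ≤ i ∧ i ≤ t} with hσ
      haveI : Fintype σ := Fintype.subtype (Finset.Icc 1 t) (fun i => Finset.mem_Icc)
      set Y : σ → Ω → ℝ := fun q ω => w q.1 * (V (Z q.1 x ω) - m x) with hY
      have hYmeas : ∀ q : σ, Measurable (Y q) :=
        fun q => (measurable_of_countable (fun s => w q.1 * (V s - m x))).comp (hZ_meas q.1 x)
      have hZx : iIndepFun
          (fun q : σ => Z q.1 x) μ := by
        have := iIndepFun_precomp (f := fun q : σ × ι => Z q.1.1 q.2)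
          (g := fun q : σ => (q, x)) (fun a b hab => by simpa using congrArg Prod.fst hab)
          hZ_indep
        exact this
      have hYindep : iIndepFun Y μ :=
        hZx.comp (fun q s => w q.1 * (V s - m x))
          (fun q => measurable_of_countable _)
      have hNsum : N x = ∑ q : σ, Y q := by
        funext ω
        rw [Finset.sum_apply]
        exact (Finset.sum_subtype (Finset.Icc 1 t)
          (fun i => Finset.mem_Icc) (fun i => w i * (V (Z i x ω) - m x)))
      -- per-variable mgf value
      have hmap : ∀ q : σ, ∀ s : S, ((μ.map (Z q.1 x)) {s}).toReal = p x s := by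
        intro q s
        rw [Measure.map_apply (hZ_meas q.1 x) (measurableSet_singleton s)]
        have : Z q.1 x ⁻¹' {s} = {ω | Z q.1 x ω = s} := rfl
        rw [this]
        exact hZ_dist q.1 q.2.1 q.2.2 x s
      have hmgf_val : ∀ (l : ℝ) (q : σ), mgf (Y q) μ l =
          ∑ s : S, p x s * exp (l * (w q.1 * (V s - m x))) := by
        intro l q
        have hprob : IsProbabilityMeasure (μ.map (Z q.1 x)) :=
          Measure.isProbabilityMeasure_map (hZ_meas q.1 x).aemeasurable
        have hmeasG : Measurable fun s : S => exp (l * (w q.1 * (V s - m x))) :=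
          measurable_of_countable _
        calc mgf (Y q) μ l = ∫ ω, exp (l * (w q.1 * (V (Z q.1 x ω) - m x))) ∂μ := rfl
          _ = ∫ s, exp (l * (w q.1 * (V s - m x))) ∂(μ.map (Z q.1 x)) :=
            (integral_map (hZ_meas q.1 x).aemeasurable hmeasG.aestronglyMeasurable).symm
          _ = ∑ s : S, ((μ.map (Z q.1 x)) {s}).toReal • exp (l * (w q.1 * (V s - m x))) :=
            integral_fintype (Integrable.of_finite)
          _ = ∑ s : S, p x s * exp (l * (w q.1 * (V s - m x))) := by
            exact Finset.sum_congr rfl fun s _ => by rw [hmap q s, smul_eq_mul]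
      -- per-variable mgf bound
      have hmgf_bound : ∀ (l : ℝ) (q : σ), mgf (Y q) μ l ≤
          exp (l ^ 2 * (w q.1 * D) ^ 2 / 8) := by
        intro l q
        rw [hmgf_val l q]
        have hwq : 0 ≤ w q.1 := hw q.1 q.2.1 q.2.2
        have hbd := hoeffding_finsum (p x) (hp_nonneg x) (hp_sum x)
          (fun s => w q.1 * (V s - m x))
          (w q.1 * (univ.inf' univ_nonempty V - m x))
          (w q.1 * (univ.sup' univ_nonempty V - m x))
          (fun s => ⟨mul_le_mul_of_nonneg_left
              (by linarith [Finset.inf'_le (f := V) (Finset.mem_univ s)]) hwq,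
            mul_le_mul_of_nonneg_left
              (by linarith [Finset.le_sup' (f := V) (Finset.mem_univ s)]) hwq⟩)
          (by
            have : ∀ s, p x s * (w q.1 * (V s - m x)) =
                w q.1 * (p x s * V s) - w q.1 * m x * p x s := fun s => by ring
            rw [Finset.sum_congr rfl fun s _ => this s, Finset.sum_sub_distrib,
              ← Finset.mul_sum, ← Finset.mul_sum, hp_sum, mul_one]
            simp [hm])
          l
        have heq : w q.1 * (univ.sup' univ_nonempty V - m x)
            - w q.1 * (univ.inf' univ_nonempty V - m x) = w q.1 * D := by
          rw [hD]; ring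
        rwa [heq] at hbd
      -- integrability
      have hint : ∀ (l : ℝ) (q : σ), Integrable (fun ω => exp (l * Y q ω)) μ := by
        intro l q
        apply Integrable.mono' (integrable_const (∑ s : S, exp (l * (w q.1 * (V s - m x)))))
          (((measurable_of_countable (fun s => exp (l * (w q.1 * (V s - m x))))).comp
            (hZ_meas q.1 x)).aestronglyMeasurable)
        apply ae_of_all
        intro ω
        simp only [Function.comp_apply, Real.norm_eq_abs, Real.abs_exp]
        exact Finset.single_le_sum (f := fun s => exp (l * (w q.1 * (V s - m x))))
          (fun s _ => (exp_pos _).le) (Finset.mem_univ (Z q.1 x ω))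
      -- mgf of the sum
      have hmgf_sum : ∀ l : ℝ, mgf (N x) μ l ≤ exp (l ^ 2 * D ^ 2 * S₂ / 8) := by
        intro l
        rw [hNsum, hYindep.mgf_sum hYmeas Finset.univ]
        calc ∏ q : σ, mgf (Y q) μ l
            ≤ ∏ q : σ, exp (l ^ 2 * (w q.1 * D) ^ 2 / 8) :=
              Finset.prod_le_prod (fun q _ => mgf_nonneg) (fun q _ => hmgf_bound l q)
          _ = exp (∑ q : σ, l ^ 2 * (w q.1 * D) ^ 2 / 8) := (Real.exp_sum _ _).symm
          _ = exp (l ^ 2 * D ^ 2 * S₂ / 8) := by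
              congr 1
              rw [Finset.sum_subtype (Finset.Icc 1 t) (fun i => Finset.mem_Icc)
                (fun i => l ^ 2 * (w i * D) ^ 2 / 8) |>.symm]
              calc ∑ i ∈ Finset.Icc 1 t, l ^ 2 * (w i * D) ^ 2 / 8
                  = ∑ i ∈ Finset.Icc 1 t, l ^ 2 * D ^ 2 / 8 * w i ^ 2 :=
                    Finset.sum_congr rfl fun i _ => by ring
                _ = l ^ 2 * D ^ 2 / 8 * S₂ := by rw [← Finset.mul_sum]
                _ = l ^ 2 * D ^ 2 * S₂ / 8 := by ring
      have hint_sum : ∀ l : ℝ, Integrable (fun ω => exp (l * N x ω)) μ := by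
        intro l
        have := hYindep.integrable_exp_mul_sum hYmeas (s := Finset.univ)
          (fun q _ => hint l q)
        rw [hNsum]
        exact this
      -- choose lambda
      set l₀ : ℝ := 4 * ε / (D ^ 2 * S₂) with hl₀
      have hl₀0 : 0 ≤ l₀ := by positivity
      have hA : D ^ 2 * S₂ ≠ 0 := by positivity
      have key2 : 2 * ε ^ 2 = L * (D ^ 2 * S₂) := by rw [hε2]; ring
      have hexp_eq : -l₀ * ε + l₀ ^ 2 * D ^ 2 * S₂ / 8 = -L := by
        have hstep1 : -l₀ * ε + l₀ ^ 2 * D ^ 2 * S₂ / 8 = -(2 * ε ^ 2) / (D ^ 2 * S₂) := by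
          rw [hl₀]; field_simp; ring
        rw [hstep1, key2, neg_div, mul_div_cancel_right₀ _ hA]
      have hexpL : exp (-L) = δ / (2 * K) := by
        rw [Real.exp_neg, hLdef, Real.exp_log (div_pos (by linarith) hδ_pos), inv_div]
      constructor
      · calc (μ {ω | ε ≤ N x ω}).toReal
            ≤ exp (-l₀ * ε) * mgf (N x) μ l₀ :=
              measure_ge_le_exp_mul_mgf ε hl₀0 (hint_sum l₀)
          _ ≤ exp (-l₀ * ε) * exp (l₀ ^ 2 * D ^ 2 * S₂ / 8) :=
              mul_le_mul_of_nonneg_left (hmgf_sum l₀) (exp_pos _).le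
          _ = exp (-l₀ * ε + l₀ ^ 2 * D ^ 2 * S₂ / 8) := (Real.exp_add _ _).symm
          _ = δ / (2 * K) := by rw [hexp_eq, hexpL]
      · calc (μ {ω | N x ω ≤ -ε}).toReal
            ≤ exp (-(-l₀) * (-ε)) * mgf (N x) μ (-l₀) :=
              measure_le_le_exp_mul_mgf (-ε) (neg_nonpos.mpr hl₀0) (hint_sum (-l₀))
          _ ≤ exp (-(-l₀) * (-ε)) * exp ((-l₀) ^ 2 * D ^ 2 * S₂ / 8) :=
              mul_le_mul_of_nonneg_left (hmgf_sum (-l₀)) (exp_pos _).le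
          _ = exp (-l₀ * ε + l₀ ^ 2 * D ^ 2 * S₂ / 8) := by
              rw [← Real.exp_add]; ring_nf
          _ = δ / (2 * K) := by rw [hexp_eq, hexpL]
    -- union bound
    have hbad : ∀ x : ι, μ {ω | ¬ |N x ω| ≤ ε} ≤ ENNReal.ofReal (δ / K) := by
      intro x
      have hsub : {ω | ¬ |N x ω| ≤ ε} ⊆ {ω | ε ≤ N x ω} ∪ {ω | N x ω ≤ -ε} := by
        intro ω hω
        simp only [Set.mem_setOf_eq, not_le] at hω
        rcases le_total 0 (N x ω) with h0 | h0
        · left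
          rw [Set.mem_setOf_eq]
          calc ε ≤ |N x ω| := hω.le
            _ = N x ω := abs_of_nonneg h0
        · right
          rw [Set.mem_setOf_eq]
          have : |N x ω| = -(N x ω) := abs_of_nonpos h0
          linarith [hω.le.trans_eq this]
      calc μ {ω | ¬ |N x ω| ≤ ε} ≤ μ ({ω | ε ≤ N x ω} ∪ {ω | N x ω ≤ -ε}) := measure_mono hsub
        _ ≤ μ {ω | ε ≤ N x ω} + μ {ω | N x ω ≤ -ε} := measure_union_le _ _
        _ ≤ ENNReal.ofReal (δ / (2 * K)) + ENNReal.ofReal (δ / (2 * K)) := by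
            have hq : (0:ℝ) ≤ δ / (2 * K) := by positivity
            exact add_le_add
              ((ENNReal.le_ofReal_iff_toReal_le (measure_ne_top μ _) hq).mpr (htail x).1)
              ((ENNReal.le_ofReal_iff_toReal_le (measure_ne_top μ _) hq).mpr (htail x).2)
        _ = ENNReal.ofReal (δ / K) := by
            rw [← ENNReal.ofReal_add (by positivity) (by positivity)]
            congr 1
            field_simp
            ring
    have hcompl : μ {ω | ∀ x : ι, |N x ω| ≤ ε}ᶜ ≤ ENNReal.ofReal δ := by
      have hsub : {ω | ∀ x : ι, |N x ω| ≤ ε}ᶜ ⊆ ⋃ x : ι, {ω | ¬ |N x ω| ≤ ε} := by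
        intro ω hω
        rw [Set.mem_compl_iff, Set.mem_setOf_eq, not_forall] at hω
        obtain ⟨x, hx⟩ := hω
        exact Set.mem_iUnion.mpr ⟨x, hx⟩
      calc μ {ω | ∀ x : ι, |N x ω| ≤ ε}ᶜ ≤ μ (⋃ x : ι, {ω | ¬ |N x ω| ≤ ε}) := measure_mono hsub
        _ ≤ ∑' (x : ι), μ {ω | ¬ |N x ω| ≤ ε} := measure_iUnion_le _
        _ = ∑ x : ι, μ {ω | ¬ |N x ω| ≤ ε} := tsum_fintype _
        _ ≤ ∑ x : ι, ENNReal.ofReal (δ / K) := Finset.sum_le_sum fun x _ => hbad x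
        _ = ((Fintype.card ι : ℕ) : ENNReal) * ENNReal.ofReal (δ / K) := by
            rw [Finset.sum_const, nsmul_eq_mul, Finset.card_univ]
        _ = ENNReal.ofReal δ := by
            rw [← ENNReal.ofReal_natCast, ← ENNReal.ofReal_mul (by positivity)]
            congr 1
            rw [hK]
            field_simp
    have hone : (1 : ENNReal) ≤ μ {ω | ∀ x : ι, |N x ω| ≤ ε} + μ {ω | ∀ x : ι, |N x ω| ≤ ε}ᶜ := by
      calc (1 : ENNReal) = μ Set.univ := (measure_univ).symm
        _ = μ ({ω | ∀ x : ι, |N x ω| ≤ ε} ∪ {ω | ∀ x : ι, |N x ω| ≤ ε}ᶜ) := by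
            rw [Set.union_compl_self]
        _ ≤ _ := measure_union_le _ _
    have hfinal : ENNReal.ofReal (1 - δ) + ENNReal.ofReal δ ≤
        μ {ω | ∀ x : ι, |N x ω| ≤ ε} + ENNReal.ofReal δ := by
      calc ENNReal.ofReal (1 - δ) + ENNReal.ofReal δ
          = ENNReal.ofReal 1 := by
            rw [← ENNReal.ofReal_add (by linarith) hδ_pos.le]
            norm_num
        _ = (1 : ENNReal) := by simp
        _ ≤ μ {ω | ∀ x : ι, |N x ω| ≤ ε} + μ {ω | ∀ x : ι, |N x ω| ≤ ε}ᶜ := hone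
        _ ≤ μ {ω | ∀ x : ι, |N x ω| ≤ ε} + ENNReal.ofReal δ := by gcongr
    exact (ENNReal.add_le_add_iff_right ENNReal.ofReal_ne_top).mp hfinal
end
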